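/- arXiv:2307.11672 — 2 statements merged into one kernel-verified Lean document; each statement's English description precedes it below -/
import Mathlib

section
/- Let d, p, C be positive integers, φ : ℝ^d → ℝ^p a measurable map, β ∈ ℝ^{p×C} with c-th column β_c, and D a probability measure on ℝ^d × ℝ^C under which y = βᵀφ(x) + ε with ε independent of x and E[ε_c] = 0. Let Σ = E_x[φ(x)φ(x)ᵀ] have orthonormal eigenvectors u_1, …, u_p with eigenvalues λ_1, …, λ_p, and assume the relevant integrability. For any K orthonormal eigenvectors u_1, …, u_K of Σ, let Ũ = [u_1 … u_K] and f = Ũ Ũᵀ φ. Then the class-c information of f equals ρ_{D,β,c}(f) = Σ_{i=1}^K λ_i (β_cᵀ u_i)² = Σ_{i=1}^K s_c(u_i), where s_c(u_i) = λ_i (β_cᵀ u_i)². -/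
open Matrix MeasureTheory ProbabilityTheory

/-- **Corollary: information of projected features.**
Under the model `y = βᵀ φ(x) + ε` with `ε` independent of `x` and mean zero, the
class-`c` information `ρ(f) = E[y_c βcᵀ f(x)]` of the projected feature
`f = Ũ Ũᵀ φ`, where `Ũ` consists of `K` orthonormal eigenvectors `u_i` of
`Σ = E_x[φ(x) φ(x)ᵀ]` with eigenvalues `λ_i`, equals
`∑_{i=1}^K λ_i (βcᵀ u_i)² = ∑_{i=1}^K s_c(u_i)`. -/
theorem information_of_projected_feature
    (d p C : ℕ) (hd : 0 < d) (hp : 0 < p) (hC : 0 < C)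
    (φ : (Fin d → ℝ) → Fin p → ℝ) (hφm : Measurable φ)
    (β : Matrix (Fin p) (Fin C) ℝ) (c : Fin C)
    (βc : Fin p → ℝ) (hβc : ∀ i, βc i = β i c)
    {Ω : Type*} [MeasurableSpace Ω] (P : Measure Ω) [IsProbabilityMeasure P]
    (X : Ω → Fin d → ℝ) (ε : Ω → Fin C → ℝ)
    (hX : Measurable X) (hε : Measurable ε)
    (hindep : IndepFun X ε P)
    (hε1 : Integrable (fun ω => ε ω c) P)
    (hεmean : ∫ ω, ε ω c ∂P = 0)
    (Cov : Matrix (Fin p) (Fin p) ℝ)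
    (hCovint : ∀ i j, Integrable (fun ω => φ (X ω) i * φ (X ω) j) P)
    (hCov : ∀ i j, Cov i j = ∫ ω, φ (X ω) i * φ (X ω) j ∂P)
    (K : ℕ) (hK : K ≤ p)
    (u : Fin K → Fin p → ℝ) (lam : Fin K → ℝ)
    (horth : ∀ i j, u i ⬝ᵥ u j = if i = j then 1 else 0)
    (heig : ∀ i, Cov.mulVec (u i) = lam i • u i)
    (f : (Fin d → ℝ) → Fin p → ℝ)
    (hf : ∀ x, f x = ∑ i : Fin K, (u i ⬝ᵥ φ x) • u i)
    (D : Measure ((Fin d → ℝ) × (Fin C → ℝ)))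
    (hD : D = P.map (fun ω => (X ω, fun c' => (∑ i, β i c' * φ (X ω) i) + ε ω c')))
    (hint : Integrable
      (fun z : (Fin d → ℝ) × (Fin C → ℝ) => z.2 c * (βc ⬝ᵥ f z.1)) D) :
    (∫ z : (Fin d → ℝ) × (Fin C → ℝ), z.2 c * (βc ⬝ᵥ f z.1) ∂D)
      = ∑ i : Fin K, lam i * (βc ⬝ᵥ u i) ^ 2 := by
  -- component measurability and integrability of φ ∘ X
  have hφXm : ∀ j, Measurable (fun ω => φ (X ω) j) := fun j =>
    (measurable_pi_apply j).comp (hφm.comp hX)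
  have hφXint : ∀ j, Integrable (fun ω => φ (X ω) j) P := by
    intro j
    have h2 : MemLp (fun ω => φ (X ω) j) 2 P := by
      rw [memLp_two_iff_integrable_sq (hφXm j).aestronglyMeasurable]
      simpa [pow_two] using hCovint j j
    exact h2.integrable one_le_two
  -- key computation for quadratic forms
  have keyint : ∀ v w : Fin p → ℝ,
      Integrable (fun ω => (v ⬝ᵥ φ (X ω)) * (w ⬝ᵥ φ (X ω))) P := by
    intro v w
    have hfun : ∀ ω, (v ⬝ᵥ φ (X ω)) * (w ⬝ᵥ φ (X ω))
        = ∑ j, ∑ k, (v j * w k) * (φ (X ω) j * φ (X ω) k) := by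
      intro ω
      rw [dotProduct, dotProduct, Finset.sum_mul_sum]
      exact Finset.sum_congr rfl fun j _ => Finset.sum_congr rfl fun k _ => by ring
    simp_rw [hfun]
    exact integrable_finset_sum _ fun j _ =>
      integrable_finset_sum _ fun k _ => (hCovint j k).const_mul _
  have keyval : ∀ v w : Fin p → ℝ,
      ∫ ω, (v ⬝ᵥ φ (X ω)) * (w ⬝ᵥ φ (X ω)) ∂P = v ⬝ᵥ Cov.mulVec w := by
    intro v w
    have hfun : ∀ ω, (v ⬝ᵥ φ (X ω)) * (w ⬝ᵥ φ (X ω))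
        = ∑ j, ∑ k, (v j * w k) * (φ (X ω) j * φ (X ω) k) := by
      intro ω
      rw [dotProduct, dotProduct, Finset.sum_mul_sum]
      exact Finset.sum_congr rfl fun j _ => Finset.sum_congr rfl fun k _ => by ring
    simp_rw [hfun]
    rw [integral_finset_sum _ fun j _ =>
      integrable_finset_sum _ fun k _ => (hCovint j k).const_mul _]
    have : ∀ j ∈ Finset.univ, (∫ ω, ∑ k, (v j * w k) * (φ (X ω) j * φ (X ω) k) ∂P)
        = ∑ k, (v j * w k) * Cov j k := by
      intro j _
      rw [integral_finset_sum _ fun k _ => (hCovint j k).const_mul _]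
      exact Finset.sum_congr rfl fun k _ => by rw [integral_const_mul, hCov]
    rw [Finset.sum_congr rfl this]
    simp only [dotProduct, mulVec, Finset.mul_sum]
    exact Finset.sum_congr rfl fun j _ => Finset.sum_congr rfl fun k _ => by ring
  -- formula for βc ⬝ᵥ f x
  have hfx : ∀ x, βc ⬝ᵥ f x = ∑ i : Fin K, (βc ⬝ᵥ u i) * (u i ⬝ᵥ φ x) := by
    intro x
    rw [hf]
    simp only [dotProduct, Finset.sum_apply, Pi.smul_apply, smul_eq_mul,
      Finset.mul_sum]
    rw [Finset.sum_comm]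
    refine Finset.sum_congr rfl fun i _ => ?_
    trans ((∑ k, u i k * φ x k) * ∑ j, βc j * u i j)
    · rw [Finset.mul_sum]
      exact Finset.sum_congr rfl fun j _ => by ring
    · rw [mul_comm, Finset.mul_sum]
  -- the feature function F
  set F : (Fin d → ℝ) → ℝ := fun x => βc ⬝ᵥ f x with hF
  have hFm : Measurable F := by
    have : F = fun x => ∑ i : Fin K, (βc ⬝ᵥ u i) * (u i ⬝ᵥ φ x) := funext hfx
    rw [this]
    refine Finset.measurable_sum _ fun i _ => (measurable_const.mul ?_)
    exact Finset.measurable_sum _ fun j _ =>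
      measurable_const.mul ((measurable_pi_apply j).comp hφm)
  have hFXint : Integrable (fun ω => F (X ω)) P := by
    have : (fun ω => F (X ω)) =
        fun ω => ∑ i : Fin K, (βc ⬝ᵥ u i) * ∑ j, u i j * φ (X ω) j := by
      funext ω; show βc ⬝ᵥ f (X ω) = _; rw [hfx]; rfl
    rw [this]
    exact integrable_finset_sum _ fun i _ =>
      ((integrable_finset_sum _ fun j _ => (hφXint j).const_mul (u i j))).const_mul _
  -- rewrite the integral over D as an integral over P
  have hmapm : Measurable (fun ω =>
      (X ω, fun c' => (∑ i, β i c' * φ (X ω) i) + ε ω c')) := by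
    refine hX.prodMk (measurable_pi_lambda _ fun c' => Measurable.add ?_ ?_)
    · exact Finset.measurable_sum _ fun i _ =>
        (((measurable_pi_apply i).comp (hφm.comp hX)).const_mul _)
    · exact (measurable_pi_apply c').comp hε
  have hintm : Measurable (fun z : (Fin d → ℝ) × (Fin C → ℝ) =>
      z.2 c * (βc ⬝ᵥ f z.1)) := by
    exact ((measurable_pi_apply c).comp measurable_snd).mul (hFm.comp measurable_fst)
  rw [hD, integral_map hmapm.aemeasurable hintm.aestronglyMeasurable]
  -- pointwise identity of the integrand
  have hβφ : ∀ ω, (∑ i, β i c * φ (X ω) i) = βc ⬝ᵥ φ (X ω) := by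
    intro ω; simp [dotProduct, hβc]
  have hpt : ∀ ω, ((∑ i, β i c * φ (X ω) i) + ε ω c) * (βc ⬝ᵥ f (X ω))
      = (βc ⬝ᵥ φ (X ω)) * F (X ω) + ε ω c * F (X ω) := by
    intro ω; rw [hβφ, hF]; ring
  simp only
  rw [show (fun ω => ((∑ i, β i c * φ (X ω) i) + ε ω c) * (βc ⬝ᵥ f (X ω)))
      = fun ω => (βc ⬝ᵥ φ (X ω)) * F (X ω) + ε ω c * F (X ω) from funext hpt]
  -- integrability of the main term
  have hmainint : Integrable (fun ω => (βc ⬝ᵥ φ (X ω)) * F (X ω)) P := by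
    have : (fun ω => (βc ⬝ᵥ φ (X ω)) * F (X ω)) = fun ω =>
        ∑ i : Fin K, (βc ⬝ᵥ u i) * ((βc ⬝ᵥ φ (X ω)) * (u i ⬝ᵥ φ (X ω))) := by
      funext ω
      rw [hF]; simp only
      rw [hfx, Finset.mul_sum]
      exact Finset.sum_congr rfl fun i _ => by ring
    rw [this]
    exact integrable_finset_sum _ fun i _ => (keyint βc (u i)).const_mul _
  -- noise term: independence gives zero
  have hnoiseindep : IndepFun (fun ω => ε ω c) (fun ω => F (X ω)) P :=
    hindep.symm.comp (measurable_pi_apply c) hFm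
  have hnoiseint : Integrable (fun ω => ε ω c * F (X ω)) P :=
    hnoiseindep.integrable_mul hε1 hFXint
  rw [integral_add hmainint hnoiseint]
  have hnoise : ∫ ω, ε ω c * F (X ω) ∂P = 0 := by
    have heq : (fun ω => ε ω c * F (X ω))
        = (fun ω => ε ω c) * (fun ω => F (X ω)) := rfl
    rw [heq, hnoiseindep.integral_mul_eq_mul_integral hε1.1 hFXint.1, hεmean, zero_mul]
  rw [hnoise, add_zero]
  -- compute the main term
  have : (fun ω => (βc ⬝ᵥ φ (X ω)) * F (X ω)) = fun ω =>
      ∑ i : Fin K, (βc ⬝ᵥ u i) * ((βc ⬝ᵥ φ (X ω)) * (u i ⬝ᵥ φ (X ω))) := by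
    funext ω
    rw [hF]; simp only
    rw [hfx, Finset.mul_sum]
    exact Finset.sum_congr rfl fun i _ => by ring
  rw [this, integral_finset_sum _ fun i _ => (keyint βc (u i)).const_mul _]
  refine Finset.sum_congr rfl fun i _ => ?_
  rw [integral_const_mul, keyval βc (u i), heig i, dotProduct_smul, smul_eq_mul]
  ring
end

section
/- Let n, C, d be positive integers, v ∈ ℝ^n a unit vector, λ > 0, Y ∈ ℝ^{n×C}, and k : ℝ^d → ℝ^n a differentiable map whose derivative is L-Lipschitz, i.e., ‖Dk(x) − Dk(x')‖_op ≤ L‖x − x'‖₂ for all x, x'. Define the NTK feature f^{ker}(x) = λ^{-1} (k(x)ᵀ v) · (Yᵀ v) ∈ ℝ^C. Then for every x ∈ ℝ^d and every perturbation δ ∈ ℝ^d, ‖f^{ker}(x+δ) − f^{ker}(x)‖₂ ≤ λ^{-1} · ‖Yᵀ v‖₂ · ( ‖Dk(x)‖_op · ‖δ‖₂ + (L/2) · ‖δ‖₂² ). In particular, for a fixed perturbation budget ‖δ‖₂ ≤ Δ, the deviation of the NTK feature is bounded by a constant (depending on x, Δ, L, Y, v but not on λ) times 1/λ, so NTK features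 with larger eigenvalues are more robust to adversarial perturbations. -/
/-!
The feature depends on `x` only through the scalar `⟪k x, v⟫`, so its variation is
`λ⁻¹ |⟪k (x + δ) - k x, v⟫| ‖Yᵀv‖ ≤ λ⁻¹ ‖k (x + δ) - k x‖ ‖Yᵀv‖` for a unit `v`. A Lipschitz
derivative makes the first-order Taylor remainder of `k` at most `(L/2) ‖δ‖²`, which bounds
`‖k (x + δ) - k x‖` by `‖Dk x‖ ‖δ‖ + (L/2) ‖δ‖²`.
-/

section

variable {E F : Type*} [NormedAddCommGroup E] [NormedSpace ℝ E]
  [NormedAddCommGroup F] [NormedSpace ℝ F] {f : E → F} {L : ℝ}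

theorem norm_sub_sub_fderiv_le_of_lipschitz_fderiv (hf : Differentiable ℝ f)
    (hL : ∀ x y, ‖fderiv ℝ f x - fderiv ℝ f y‖ ≤ L * ‖x - y‖) (x δ : E) :
    ‖f (x + δ) - f x - fderiv ℝ f x δ‖ ≤ L / 2 * ‖δ‖ ^ 2 := by
  set g : ℝ → F := fun t ↦ f (x + t • δ) - f x - t • fderiv ℝ f x δ
  have hg : ∀ t, HasDerivAt g (fderiv ℝ f (x + t • δ) δ - fderiv ℝ f x δ) t := fun t ↦ by
    have hline : HasDerivAt (fun t : ℝ ↦ x + t • δ) δ t := by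
      simpa using ((hasDerivAt_id t).smul_const δ).const_add x
    exact (((hf _).hasFDerivAt.comp_hasDerivAt t hline).sub_const (f x)).sub
      (by simpa using (hasDerivAt_id t).smul_const (fderiv ℝ f x δ))
  -- `g` is compared with `t ↦ (L/2) t² ‖δ‖²`, whose derivative dominates `‖g' t‖` on `[0, 1]`.
  have hB : ∀ t : ℝ, HasDerivAt (fun t ↦ L / 2 * t ^ 2 * ‖δ‖ ^ 2) (L * t * ‖δ‖ ^ 2) t := fun t ↦
    (((hasDerivAt_pow 2 t).const_mul (L / 2)).mul_const (‖δ‖ ^ 2)).congr_deriv (by ring)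
  have hg' : ∀ t ∈ Set.Ico (0 : ℝ) 1,
      ‖fderiv ℝ f (x + t • δ) δ - fderiv ℝ f x δ‖ ≤ L * t * ‖δ‖ ^ 2 := by
    rintro t ⟨ht, -⟩
    calc ‖fderiv ℝ f (x + t • δ) δ - fderiv ℝ f x δ‖
        ≤ ‖fderiv ℝ f (x + t • δ) - fderiv ℝ f x‖ * ‖δ‖ := by
          rw [← sub_apply]; exact ContinuousLinearMap.le_opNorm _ _
      _ ≤ L * ‖x + t • δ - x‖ * ‖δ‖ := by gcongr; exact hL _ _
      _ = L * t * ‖δ‖ ^ 2 := by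
          rw [add_sub_cancel_left, norm_smul, Real.norm_of_nonneg ht]; ring
  simpa [g] using image_norm_le_of_norm_deriv_right_le_deriv_boundary
    (fun t _ ↦ (hg t).continuousAt.continuousWithinAt) (fun t _ ↦ (hg t).hasDerivWithinAt)
    (by simp [g]) hB hg' (Set.right_mem_Icc.2 zero_le_one)

theorem norm_sub_le_of_lipschitz_fderiv (hf : Differentiable ℝ f)
    (hL : ∀ x y, ‖fderiv ℝ f x - fderiv ℝ f y‖ ≤ L * ‖x - y‖) (x δ : E) :
    ‖f (x + δ) - f x‖ ≤ ‖fderiv ℝ f x‖ * ‖δ‖ + L / 2 * ‖δ‖ ^ 2 :=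
  calc ‖f (x + δ) - f x‖ ≤ ‖fderiv ℝ f x δ‖ + ‖f (x + δ) - f x - fderiv ℝ f x δ‖ :=
        norm_le_insert' _ _
    _ ≤ ‖fderiv ℝ f x‖ * ‖δ‖ + L / 2 * ‖δ‖ ^ 2 := by
        gcongr
        · exact (fderiv ℝ f x).le_opNorm δ
        · exact norm_sub_sub_fderiv_le_of_lipschitz_fderiv hf hL x δ

end

theorem nonneg_of_norm_sub_le_mul_norm_sub {E F : Type*} [NormedAddCommGroup E] [Nontrivial E]
    [SeminormedAddCommGroup F] {g : E → F} {L : ℝ}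
    (hg : ∀ x y, ‖g x - g y‖ ≤ L * ‖x - y‖) : 0 ≤ L := by
  obtain ⟨x, y, hxy⟩ := exists_pair_ne E
  exact nonneg_of_mul_nonneg_left ((norm_nonneg _).trans (hg x y))
    (norm_pos_iff.2 (sub_ne_zero.2 hxy))

theorem ntk_feature_robustness_top_spectrum_general
    (n C d : ℕ) (hd : 0 < d)
    (v : EuclideanSpace ℝ (Fin n)) (hv : ‖v‖ = 1)
    (lam : ℝ) (hlam : 0 < lam)
    (k : EuclideanSpace ℝ (Fin d) → EuclideanSpace ℝ (Fin n))
    (hk : Differentiable ℝ k)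
    (L : ℝ)
    (hL : ∀ x x', ‖fderiv ℝ k x - fderiv ℝ k x'‖ ≤ L * ‖x - x'‖)
    (Yv : EuclideanSpace ℝ (Fin C))
    (f : EuclideanSpace ℝ (Fin d) → EuclideanSpace ℝ (Fin C))
    (hf : ∀ x, f x = (lam⁻¹ * (inner ℝ (k x) v : ℝ)) • Yv) :
    (∀ x δ : EuclideanSpace ℝ (Fin d),
        ‖f (x + δ) - f x‖
          ≤ lam⁻¹ * ‖Yv‖ * (‖fderiv ℝ k x‖ * ‖δ‖ + L / 2 * ‖δ‖ ^ 2))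
    ∧ (∀ (x : EuclideanSpace ℝ (Fin d)) (Δ : ℝ) (δ : EuclideanSpace ℝ (Fin d)),
        ‖δ‖ ≤ Δ →
        ‖f (x + δ) - f x‖
          ≤ (‖Yv‖ * (‖fderiv ℝ k x‖ * Δ + L / 2 * Δ ^ 2)) / lam) := by
  have bound : ∀ x δ, ‖f (x + δ) - f x‖
      ≤ lam⁻¹ * ‖Yv‖ * (‖fderiv ℝ k x‖ * ‖δ‖ + L / 2 * ‖δ‖ ^ 2) := fun x δ ↦
    calc ‖f (x + δ) - f x‖ = lam⁻¹ * |inner ℝ (k (x + δ) - k x) v| * ‖Yv‖ := by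
          rw [hf, hf, ← sub_smul, ← mul_sub, ← inner_sub_left, norm_smul, Real.norm_eq_abs,
            abs_mul, abs_of_pos (inv_pos.2 hlam)]
      _ ≤ lam⁻¹ * ‖k (x + δ) - k x‖ * ‖Yv‖ := by
          gcongr; simpa [hv] using abs_real_inner_le_norm (k (x + δ) - k x) v
      _ ≤ lam⁻¹ * (‖fderiv ℝ k x‖ * ‖δ‖ + L / 2 * ‖δ‖ ^ 2) * ‖Yv‖ := by
          gcongr; exact norm_sub_le_of_lipschitz_fderiv hk hL x δ
      _ = lam⁻¹ * ‖Yv‖ * (‖fderiv ℝ k x‖ * ‖δ‖ + L / 2 * ‖δ‖ ^ 2) := by ring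
  have : Nonempty (Fin d) := ⟨⟨0, hd⟩⟩
  have hL0 : 0 ≤ L := nonneg_of_norm_sub_le_mul_norm_sub hL
  refine ⟨bound, fun x Δ δ hδ ↦ ?_⟩
  calc ‖f (x + δ) - f x‖ ≤ lam⁻¹ * ‖Yv‖ * (‖fderiv ℝ k x‖ * ‖δ‖ + L / 2 * ‖δ‖ ^ 2) := bound x δ
    _ ≤ lam⁻¹ * ‖Yv‖ * (‖fderiv ℝ k x‖ * Δ + L / 2 * Δ ^ 2) := by gcongr
    _ = ‖Yv‖ * (‖fderiv ℝ k x‖ * Δ + L / 2 * Δ ^ 2) / lam := by ring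

/-- **Robustness of NTK features lies at the top of the spectrum (Proposition 1).**
For an eigenpair `(λ, v)` of the NTK Gram matrix (`λ > 0`, `v` a unit vector), a
label matrix `Y`, and a differentiable kernel-vector map `k` whose derivative is
`L`-Lipschitz, the NTK feature `f(x) = λ⁻¹ (k(x)ᵀ v) (Yᵀ v)` satisfies
`‖f(x+δ) − f(x)‖ ≤ λ⁻¹ ‖Yᵀv‖ (‖Dk(x)‖ ‖δ‖ + (L/2) ‖δ‖²)`; in particular, for a
perturbation budget `‖δ‖ ≤ Δ` the deviation is bounded by a constant (independent
of `λ`) times `1/λ`. -/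
theorem ntk_feature_robustness_top_spectrum
    (n C d : ℕ) (hn : 0 < n) (hC : 0 < C) (hd : 0 < d)
    (v : EuclideanSpace ℝ (Fin n)) (hv : ‖v‖ = 1)
    (lam : ℝ) (hlam : 0 < lam)
    (Y : Matrix (Fin n) (Fin C) ℝ)
    (k : EuclideanSpace ℝ (Fin d) → EuclideanSpace ℝ (Fin n))
    (hk : Differentiable ℝ k)
    (L : ℝ)
    (hL : ∀ x x', ‖fderiv ℝ k x - fderiv ℝ k x'‖ ≤ L * ‖x - x'‖)
    (Yv : EuclideanSpace ℝ (Fin C)) (hYv : ∀ c, Yv c = ∑ i, Y i c * v i)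
    (f : EuclideanSpace ℝ (Fin d) → EuclideanSpace ℝ (Fin C))
    (hf : ∀ x, f x = (lam⁻¹ * (inner ℝ (k x) v : ℝ)) • Yv) :
    (∀ x δ : EuclideanSpace ℝ (Fin d),
        ‖f (x + δ) - f x‖
          ≤ lam⁻¹ * ‖Yv‖ * (‖fderiv ℝ k x‖ * ‖δ‖ + L / 2 * ‖δ‖ ^ 2))
    ∧ (∀ (x : EuclideanSpace ℝ (Fin d)) (Δ : ℝ) (δ : EuclideanSpace ℝ (Fin d)),
        ‖δ‖ ≤ Δ →
        ‖f (x + δ) - f x‖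
          ≤ (‖Yv‖ * (‖fderiv ℝ k x‖ * Δ + L / 2 * Δ ^ 2)) / lam) :=
  ntk_feature_robustness_top_spectrum_general n C d hd v hv lam hlam k hk L hL Yv f hf
end
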